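/- Let L be a finite meet-semilattice and G a building set in L. Then the nested set complex N(L,G) is homotopy equivalent to the order complex Δ(L \ {0̂}). -/

import Mathlib

open scoped BigOperators

variable {L : Type*}

/-- The set of maximal elements of `G` below `X` (the `G`-factors of `X`). -/
def factorsSet [PartialOrder L] (G : Set L) (X : L) : Set L :=
  {g | g ∈ G ∧ g ≤ X ∧ ∀ h ∈ G, h ≤ X → g ≤ h → g = h}

/-- `G` is a building set in the meet-semilattice `L` with minimal element `⊥`:
every element of `G` is nonminimal, and for every `X ≠ ⊥` there is a poset
isomorphism from the product of the lower intervals of the factors of `X`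
to the lower interval of `X`, sending the `g`-th "unit vector" to `g`. -/
def IsBuilding (L : Type*) [PartialOrder L] [OrderBot L] (G : Set L) : Prop :=
  (∀ g ∈ G, g ≠ ⊥) ∧
  ∀ X : L, X ≠ ⊥ →
    ∃ φ : ((g : factorsSet G X) → Set.Icc (⊥ : L) g.1) ≃o Set.Icc (⊥ : L) X,
      ∀ (g : factorsSet G X) (u : (h : factorsSet G X) → Set.Icc (⊥ : L) h.1),
        (u g : L) = g.1 → (∀ h, h ≠ g → (u h : L) = (⊥ : L)) → ((φ u : L) = g.1)

/-- A finite subset `S ⊆ G` is nested: every antichain in `S` of size at least 2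
has a least upper bound in `L` which does not belong to `G`. -/
def IsNested [PartialOrder L] (G : Set L) (S : Finset L) : Prop :=
  ↑S ⊆ G ∧ ∀ A : Finset L, A ⊆ S → IsAntichain (· ≤ ·) (A : Set L) → 2 ≤ A.card →
    ∃ j, IsLUB (A : Set L) j ∧ j ∉ G

/-- The nested set complex, as the collection of its faces. -/
def nestedComplex [PartialOrder L] (G : Set L) : Set (Finset L) := {S | IsNested G S}

/-- The order complex of a poset: the collection of finite chains. -/
def chainComplex (V : Type*) [Preorder V] : Set (Finset V) :=
  {S | IsChain (· ≤ ·) (S : Set V)}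

/-- The order complex of `L \ {⊥}`, with vertex set inside `L`. -/
def orderComplexBot (L : Type*) [PartialOrder L] [OrderBot L] : Set (Finset L) :=
  {S | (S : Set L) ⊆ {x | x ≠ ⊥} ∧ IsChain (· ≤ ·) (S : Set L)}

/-- Geometric realization of an abstract simplicial complex (given by its set of
faces, as finsets of the vertex type `V`): convex combinations of vertices
supported on a face. -/
abbrev geomReal {V : Type*} (K : Set (Finset V)) : Type _ :=
  {f : V → ℝ // (∀ v, 0 ≤ f v) ∧ ∃ s ∈ K, (∀ v, f v ≠ 0 → v ∈ s) ∧ ∑ v ∈ s, f v = 1}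

/-- The subposet of the face poset of the nested set complex consisting of the
nonempty nested sets whose join is `≤ X`. -/
def NestedFiber [PartialOrder L] (G : Set L) (X : L) :=
  {S : Finset L // IsNested G S ∧ S.Nonempty ∧ ∃ j, IsLUB (S : Set L) j ∧ j ≤ X}

instance [PartialOrder L] (G : Set L) (X : L) : PartialOrder (NestedFiber G X) := by
  unfold NestedFiber; infer_instance

/-- The face poset of the nested set complex: nonempty nested sets ordered by inclusion. -/
def NestedFaces [PartialOrder L] (G : Set L) :=
  {S : Finset L // IsNested G S ∧ S.Nonempty}

instance [PartialOrder L] (G : Set L) : PartialOrder (NestedFaces G) := by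
  unfold NestedFaces; infer_instance

/-- The combinatorial blowup of a poset `M` at `X`: elements `Y` (marked `false`)
with `Y ≱ X`, and elements `Ŷ` (marked `true`) with `Y ≱ X` such that `Y ∨ X`
exists; ordered by `Y ≺ Z` iff `Y < Z`, `Ŷ ≺ Ẑ` iff `Y < Z`, `Y ≺ Ẑ` iff `Y ≤ Z`. -/
def Bl {M : Type*} [PartialOrder M] (X : M) :=
  {p : M × Bool // ¬ X ≤ p.1 ∧ (p.2 = true → ∃ j, IsLUB {p.1, X} j)}

noncomputable instance {M : Type*} [PartialOrder M] (X : M) : PartialOrder (Bl X) := by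
  unfold Bl; infer_instance

/-- The atoms of `L`, used as coordinates for the realization of nested set fans. -/
def Atoms (L : Type*) [PartialOrder L] [OrderBot L] := {a : L // IsAtom a}

open Classical in
/-- The characteristic vector of the set of atoms below `X`. -/
noncomputable def charVec [PartialOrder L] [OrderBot L] (X : L) : Atoms L → ℝ :=
  fun a => if a.1 ≤ X then 1 else 0

/-- The polyhedral cone spanned by the characteristic vectors of elements of `S`. -/
noncomputable def coneOf [PartialOrder L] [OrderBot L] (S : Finset L) : Set (Atoms L → ℝ) :=
  {y | ∃ c : L → ℝ, (∀ x, 0 ≤ c x) ∧ y = ∑ x ∈ S, c x • charVec x}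

/-- The fan associated to a building set: the cones spanned by the nested sets. -/
def fanOf [PartialOrder L] [OrderBot L] (G : Set L) : Set (Set (Atoms L → ℝ)) :=
  {C | ∃ S : Finset L, IsNested G S ∧ C = coneOf S}

/-- The cone generated by a ray `v` together with a cone `c`. -/
def rayJoin {E : Type*} [AddCommMonoid E] [Module ℝ E] (v : E) (c : Set E) : Set E :=
  {y | ∃ a : ℝ, ∃ x ∈ c, 0 ≤ a ∧ y = a • v + x}

/-- The stellar subdivision of a fan `F` at the cone `σ` with new ray `v`:
cones not containing `σ` are kept, and each cone `τ ⊇ σ` is replaced by the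
joins of `v` with the faces of `τ` not containing `σ`. -/
def stellarSub {E : Type*} [AddCommMonoid E] [Module ℝ E]
    (F : Set (Set E)) (σ : Set E) (v : E) : Set (Set E) :=
  {τ | τ ∈ F ∧ ¬ σ ⊆ τ} ∪
  {D | ∃ τ ∈ F, σ ⊆ τ ∧ ∃ c ∈ F, c ⊆ τ ∧ ¬ σ ⊆ c ∧ D = rayJoin v c}


/-!
Sending a vertex `X` of `Δ(L \ {⊥})` to the barycentre of the simplex `F(X)` of its factors and
extending linearly gives a homeomorphism of geometric realizations. Its image lies in `N(L, G)`
because the factors of the elements of a chain form a nested set. It is injective because, for a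
weight `f` on a chain and `a X = f X / #F(X)`, the upper sums `∑_{Z ≥ X} a Z` are recovered from
the image: at `g ∈ G` they are the upper sums of the image, since `g` lies below exactly one factor
of each `X ≥ g`, and at `X` they are the minimum of those over the factors of `X`; the zeta
transform is invertible. It is surjective because a point of a nested simplex is the image of a
weight on the chain of joins of the superlevel sets of its upper sums. A continuous bijection from
a compact space to a Hausdorff space is a homeomorphism.
-/

open Finset

section Order

variable {α : Type*}

lemma IsChain.exists_isGreatest [PartialOrder α] {s : Set α} (hs : IsChain (· ≤ ·) s)
    (hfin : s.Finite) (hne : s.Nonempty) : ∃ m, IsGreatest s m := by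
  obtain ⟨m, hms, hmax⟩ := hfin.exists_maximal hne
  refine ⟨m, hms, fun x hx => ?_⟩
  rcases hs.total hx hms with h | h
  exacts [h, hmax hx h]

lemma exists_isLUB_of_bddAbove [SemilatticeInf α] [Finite α] {s : Set α} (hs : BddAbove s) :
    ∃ j, IsLUB s j := by
  classical
  have := Fintype.ofFinite α
  obtain ⟨y, hy⟩ := hs
  exact ⟨(upperBounds s).toFinset.inf' ⟨y, Set.mem_toFinset.2 hy⟩ id,
    fun a ha => le_inf' _ _ fun u hu => Set.mem_toFinset.1 hu ha,
    fun u hu => inf'_le _ (Set.mem_toFinset.2 hu)⟩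

open Classical in
/-- The zeta transform of `a`. -/
noncomputable def upperSum [Preorder α] [Fintype α] {M : Type*} [AddCommMonoid M]
    (a : α → M) (x : α) : M :=
  ∑ y ∈ univ.filter (x ≤ ·), a y

lemma upperSum_antitone [Preorder α] [Fintype α] {a : α → ℝ} (ha : ∀ x, 0 ≤ a x) :
    Antitone (upperSum a) := fun _ _ hxy =>
  sum_le_sum_of_subset_of_nonneg (fun _ hz => by simp_all [hxy.trans])
    fun z _ _ => ha z

open Classical in
lemma upperSum_sum_ite_eq [Preorder α] [Fintype α] {ι : Type*} (V : Finset ι) (X : ι → α)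
    (c : ι → ℝ) (x : α) :
    upperSum (fun y => ∑ v ∈ V, if X v = y then c v else 0) x =
      ∑ v ∈ V.filter (x ≤ X ·), c v := by
  rw [upperSum, sum_comm, sum_filter]
  refine sum_congr rfl fun v _ => ?_
  simp [sum_ite_eq]

lemma eq_of_upperSum_eq [PartialOrder α] [Fintype α] {M : Type*} [AddCommGroup M]
    {s : Set α} {a b : α → M} (ha : ∀ x ∉ s, a x = 0) (hb : ∀ x ∉ s, b x = 0)
    (h : ∀ x ∈ s, upperSum a x = upperSum b x) : a = b := by
  classical
  have : WellFoundedGT α := Finite.to_wellFoundedGT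
  funext x
  induction x using WellFoundedGT.induction with
  | _ x ih =>
    by_cases hx : x ∈ s
    · have hsplit : ∀ c : α → M, upperSum c x = c x + ∑ y ∈ univ.filter (x < ·), c y := by
        intro c
        rw [upperSum, ← add_sum_erase _ _ (mem_filter.2 ⟨mem_univ x, le_rfl⟩)]
        congr 2
        ext y
        simp [lt_iff_le_and_ne, eq_comm, and_comm]
      have hx' := h x hx
      rw [hsplit, hsplit, sum_congr rfl fun y hy => ih y (mem_filter.1 hy).2] at hx'
      exact add_right_cancel hx'
    · rw [ha x hx, hb x hx]

/-- The distance from `v` down to the next smaller element of `V`, or to `0` if there is none. -/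
noncomputable def prevGap (V : Finset ℝ) (v : ℝ) : ℝ :=
  v - ((V.filter (· < v)).max.unbotD 0)

lemma prevGap_nonneg {V : Finset ℝ} {v : ℝ} (hv : 0 ≤ v) : 0 ≤ prevGap V v := by
  rw [prevGap, sub_nonneg, WithBot.unbotD_le_iff fun _ => hv]
  exact Finset.max_le fun x hx => WithBot.coe_le_coe.2 (mem_filter.1 hx).2.le

lemma sum_prevGap {V : Finset ℝ} {T : ℝ} (hT : T ∈ V) :
    ∑ v ∈ V.filter (· ≤ T), prevGap V v = T := by
  induction V using Finset.induction_on_max generalizing T with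
  | empty => simp at hT
  | insert a s hlt ih =>
    have hprev : ∀ v ∈ s, prevGap (insert a s) v = prevGap s v := fun v hv => by
      rw [prevGap, prevGap, filter_insert, if_neg (hlt v hv).not_gt]
    rcases mem_insert.1 hT with rfl | hT
    · have hall : (insert T s).filter (· ≤ T) = insert T s :=
        filter_true_of_mem fun x hx => (mem_insert.1 hx).elim le_of_eq fun hx => (hlt x hx).le
      have hs : s.filter (· < T) = s := filter_true_of_mem hlt
      rw [hall, sum_insert fun h => (hlt T h).false, sum_congr rfl hprev, prevGap,
        filter_insert, if_neg (lt_irrefl T), hs]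
      rcases s.eq_empty_or_nonempty with rfl | hne
      · simp
      · have := ih (s.max'_mem hne)
        rw [filter_true_of_mem fun x hx => s.le_max' x hx] at this
        rw [this, ← coe_max' hne, WithBot.unbotD_coe, sub_add_cancel]
    · rw [filter_insert, if_neg (hlt T hT).not_ge]
      exact (sum_congr rfl fun v hv => hprev v (mem_filter.1 hv).1).trans (ih hT)

end Order

section Factors

variable {L : Type*} [PartialOrder L] {G : Set L} {g X : L}

lemma exists_mem_factorsSet_ge [Finite L] (hg : g ∈ G) (hgX : g ≤ X) :
    ∃ h ∈ factorsSet G X, g ≤ h := by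
  obtain ⟨h, hgh, ⟨hhG, hhX⟩, hmax⟩ :=
    (Set.toFinite {h | h ∈ G ∧ h ≤ X}).exists_le_maximal (a := g) ⟨hg, hgX⟩
  exact ⟨h, ⟨hhG, hhX, fun k hk hkX hhk => le_antisymm hhk (hmax ⟨hk, hkX⟩ hhk)⟩, hgh⟩

end Factors

section Building

variable {L : Type*} [SemilatticeInf L] [OrderBot L] {G : Set L} {g X : L}

variable (G X) in
def factorTop : (g : factorsSet G X) → Set.Icc (⊥ : L) g.1 := fun g => ⟨g, bot_le, le_rfl⟩

variable (G X) in
def factorBot : (g : factorsSet G X) → Set.Icc (⊥ : L) g.1 := fun _ => ⟨⊥, le_rfl, bot_le⟩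

open Classical in
noncomputable def unitAt (k : factorsSet G X) : (g : factorsSet G X) → Set.Icc (⊥ : L) g.1 :=
  Function.update (factorBot G X) k (factorTop G X k)

lemma IsBuilding.exists_orderIso (hG : IsBuilding L G) (hX : X ≠ ⊥) :
    ∃ φ : ((g : factorsSet G X) → Set.Icc (⊥ : L) g.1) ≃o Set.Icc (⊥ : L) X,
      ∀ k, (φ (unitAt k) : L) = k := by
  obtain ⟨φ, hφ⟩ := hG.2 X hX
  refine ⟨φ, fun k => hφ k _ (by simp [unitAt, factorTop]) fun j hj => ?_⟩
  simp [unitAt, hj, factorBot]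

lemma le_unitAt_iff (u : (g : factorsSet G X) → Set.Icc (⊥ : L) g.1) (k : factorsSet G X) :
    u ≤ unitAt k ↔ ∀ j ≠ k, (u j : L) = ⊥ := by
  simp only [unitAt, le_update_iff, factorBot, factorTop, ← Subtype.coe_le_coe, le_bot_iff]
  exact and_iff_right (u k).2.2

section Coordinates

variable {φ : ((g : factorsSet G X) → Set.Icc (⊥ : L) g.1) ≃o Set.Icc (⊥ : L) X}

lemma coe_apply_factorBot : (φ (factorBot G X) : L) = ⊥ :=
  le_bot_iff.1 <| (φ.le_symm_apply.1 fun _ => (Subtype.mk_le_mk).2 bot_le :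
    φ (factorBot G X) ≤ ⟨⊥, le_rfl, bot_le⟩)

variable (hφ : ∀ k, (φ (unitAt k) : L) = k)
include hφ

lemma symm_apply_le_unitAt_iff (Y : Set.Icc (⊥ : L) X) (k : factorsSet G X) :
    φ.symm Y ≤ unitAt k ↔ (Y : L) ≤ k := by
  rw [φ.symm_apply_le, ← Subtype.coe_le_coe, hφ]

lemma coe_le_iff_symm_apply (Y : Set.Icc (⊥ : L) X) (k : factorsSet G X) :
    (k : L) ≤ Y ↔ (φ.symm Y k : L) = k := by
  classical
  have : (k : L) ≤ Y ↔ φ (unitAt k) ≤ Y := by rw [← Subtype.coe_le_coe, hφ]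
  rw [this, ← φ.le_symm_apply, unitAt, update_le_iff]
  simp only [factorTop, factorBot, ← Subtype.coe_le_coe, bot_le, implies_true, and_true]
  exact ⟨le_antisymm (φ.symm Y k).2.2, ge_of_eq⟩

end Coordinates

namespace IsBuilding

variable (hG : IsBuilding L G)
include hG

lemma factorsSet_nonempty (hX : X ≠ ⊥) : (factorsSet G X).Nonempty := by
  by_contra hne
  have : IsEmpty (factorsSet G X) := Set.isEmpty_coe_sort.2 (Set.not_nonempty_iff_eq_empty.1 hne)
  obtain ⟨φ, -⟩ := hG.exists_orderIso hX
  have hφX : φ.symm ⟨X, bot_le, le_rfl⟩ = factorBot G X := Subsingleton.elim _ _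
  exact hX ((congrArg Subtype.val (φ.symm_apply_eq.1 hφX)).trans coe_apply_factorBot)

lemma le_of_forall_factorsSet_le (hX : X ≠ ⊥) {Y : L} (hY : ∀ g ∈ factorsSet G X, g ≤ Y) :
    X ≤ Y := by
  obtain ⟨φ, hφ⟩ := hG.exists_orderIso hX
  have : φ.symm ⟨X ⊓ Y, bot_le, inf_le_left⟩ = φ.symm ⟨X, bot_le, le_rfl⟩ := by
    funext k
    refine Subtype.ext ?_
    rw [(coe_le_iff_symm_apply hφ _ k).1 (le_inf k.2.2.1 (hY k k.2)),
      (coe_le_iff_symm_apply hφ _ k).1 k.2.2.1]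
  exact inf_eq_left.1 (congrArg Subtype.val (φ.symm.injective this))

lemma ne_bot_of_mem_factorsSet (hg : g ∈ factorsSet G X) : X ≠ ⊥ :=
  fun hX => hG.1 g hg.1 (le_bot_iff.1 (hX ▸ hg.2.1))

lemma eq_of_le_of_mem_factorsSet (hg : g ∈ G) {h₁ h₂ : L} (h₁X : h₁ ∈ factorsSet G X)
    (h₂X : h₂ ∈ factorsSet G X) (hgh₁ : g ≤ h₁) (hgh₂ : g ≤ h₂) : h₁ = h₂ := by
  by_contra hne
  obtain ⟨φ, hφ⟩ := hG.exists_orderIso (hG.ne_bot_of_mem_factorsSet h₁X)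
  set Y : Set.Icc (⊥ : L) X := ⟨g, bot_le, hgh₁.trans h₁X.2.1⟩
  have le₁ := (le_unitAt_iff _ _).1 ((symm_apply_le_unitAt_iff hφ Y ⟨h₁, h₁X⟩).2 hgh₁)
  have le₂ := (le_unitAt_iff _ _).1 ((symm_apply_le_unitAt_iff hφ Y ⟨h₂, h₂X⟩).2 hgh₂)
  have hY : φ.symm Y = factorBot G X := by
    funext j
    refine Subtype.ext ?_
    by_cases hj : j = ⟨h₁, h₁X⟩
    · exact le₂ j (by rw [hj]; exact fun h => hne (congrArg Subtype.val h))
    · exact le₁ j hj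
  exact hG.1 g hg ((congrArg Subtype.val (φ.symm_apply_eq.1 hY)).trans coe_apply_factorBot)

/-- In the product decomposition of `[⊥, X]`, the elements of `A` not below `h` vanish in the
`h`-th coordinate. -/
lemma isLUB_sep_le_of_mem_factorsSet [Finite L] {A : Set L} (hA : A ⊆ G)
    (hX : IsLUB A X) {h : L} (hh : h ∈ factorsSet G X) : IsLUB {a ∈ A | a ≤ h} h := by
  classical
  refine ⟨fun a ha => ha.2, fun Z hZ => ?_⟩
  obtain ⟨φ, hφ⟩ := hG.exists_orderIso (hG.ne_bot_of_mem_factorsSet hh)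
  set k : factorsSet G X := ⟨h, hh⟩
  set Zh : Set.Icc (⊥ : L) X := ⟨Z ⊓ h, bot_le, inf_le_right.trans hh.2.1⟩
  let u := Function.update (factorTop G X) k (φ.symm Zh k)
  have hAu : ∀ a (ha : a ∈ A), φ.symm ⟨a, bot_le, hX.1 ha⟩ ≤ u := by
    intro a ha
    refine le_update_iff.2 ⟨?_, fun j _ => (φ.symm _ j).2.2⟩
    by_cases hah : a ≤ h
    · exact φ.symm.monotone (Subtype.mk_le_mk.2 (le_inf (hZ ⟨ha, hah⟩) hah)) k
    · obtain ⟨k', hk', hak'⟩ := exists_mem_factorsSet_ge (hA ha) (hX.1 ha)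
      have hkk' : k ≠ ⟨k', hk'⟩ := fun hkk' => hah (hak'.trans (congrArg Subtype.val hkk').ge)
      have := (le_unitAt_iff _ _).1
        ((symm_apply_le_unitAt_iff hφ ⟨a, bot_le, hX.1 ha⟩ ⟨k', hk'⟩).2 hak') k hkk'
      rw [← Subtype.coe_le_coe, this]
      exact bot_le
  have hXu : φ.symm ⟨X, bot_le, le_rfl⟩ ≤ u :=
    φ.symm_apply_le.2 <| Subtype.mk_le_mk.2 <| hX.2 fun a ha =>
      Subtype.mk_le_mk.1 (φ.symm_apply_le.1 (hAu a ha))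
  have hXk : (φ.symm ⟨X, bot_le, le_rfl⟩ k : L) = h := (coe_le_iff_symm_apply hφ _ k).1 hh.2.1
  have hZk : (φ.symm Zh k : L) = h := by
    refine le_antisymm (φ.symm Zh k).2.2 ?_
    have := hXu k
    rw [show u k = φ.symm Zh k from Function.update_self .., ← Subtype.coe_le_coe, hXk] at this
    exact this
  exact ((coe_le_iff_symm_apply hφ Zh k).2 hZk).trans inf_le_left

end IsBuilding

end Building

section Nested

variable {L : Type*} [PartialOrder L] {G : Set L} {S M : Finset L}

lemma IsNested.mono (hS : IsNested G S) (hMS : M ⊆ S) : IsNested G M :=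
  ⟨(coe_subset.2 hMS).trans hS.1, fun A hA => hS.2 A (hA.trans hMS)⟩

lemma IsNested.exists_isLUB (hM : IsNested G M) (hanti : IsAntichain (· ≤ ·) (M : Set L))
    (hne : M.Nonempty) : ∃ X, IsLUB (M : Set L) X := by
  obtain ⟨m, rfl⟩ | hnt := hne.exists_eq_singleton_or_nontrivial
  · exact ⟨m, by simp⟩
  · obtain ⟨j, hj, -⟩ := hM.2 M subset_rfl hanti (one_lt_card_iff_nontrivial.2 hnt)
    exact ⟨j, hj⟩

end Nested

section NestedBuilding

variable {L : Type*} [SemilatticeInf L] [OrderBot L] [Finite L] {G : Set L} {S M : Finset L}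
  {X : L}

lemma IsBuilding.factorsSet_eq_of_isNested (hG : IsBuilding L G) (hM : IsNested G M)
    (hanti : IsAntichain (· ≤ ·) (M : Set L)) (hX : IsLUB (M : Set L) X) :
    factorsSet G X = M := by
  classical
  have hsub : factorsSet G X ⊆ M := by
    intro h hh
    set N := M.filter (· ≤ h)
    have hN : IsLUB (N : Set L) h := by
      simpa [N] using hG.isLUB_sep_le_of_mem_factorsSet hM.1 hX hh
    rcases N.eq_empty_or_nonempty with hN0 | hNne
    · rw [hN0, coe_empty, isLUB_empty_iff, isBot_iff_eq_bot] at hN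
      exact absurd hN (hG.1 h hh.1)
    obtain ⟨m, hm⟩ | hnt := hNne.exists_eq_singleton_or_nontrivial
    · have hmM : m ∈ M := (mem_filter.1 (hm ▸ mem_singleton_self m)).1
      rw [hm, coe_singleton] at hN
      rwa [isLUB_singleton.unique hN] at hmM
    · obtain ⟨j, hj, hjG⟩ := hM.2 N (filter_subset _ _)
        (hanti.subset (coe_subset.2 (filter_subset _ _))) (one_lt_card_iff_nontrivial.2 hnt)
      exact absurd (hN.unique hj ▸ hh.1) hjG
  refine hsub.antisymm fun m hm => ?_
  obtain ⟨h, hh, hmh⟩ := exists_mem_factorsSet_ge (hM.1 hm) (hX.1 hm)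
  rwa [hanti.eq hm (hsub hh) hmh]

/-- The factors of the join of `U` are the maximal elements of `U`. -/
lemma IsBuilding.exists_isLUB_of_isNested (hG : IsBuilding L G) (hS : IsNested G S)
    {U : Finset L} (hUS : U ⊆ S) (hU : ∀ g ∈ S, ∀ h ∈ U, g ≤ h → g ∈ U) (hne : U.Nonempty) :
    ∃ X, IsLUB (U : Set L) X ∧ factorsSet G X ⊆ S ∧ ∀ g ∈ S, g ≤ X → g ∈ U := by
  classical
  set M := U.filter (Maximal (· ∈ U))
  have hMU : M ⊆ U := filter_subset _ _
  have hanti : IsAntichain (· ≤ ·) (M : Set L) :=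
    (setOfPred_maximal_antichain (· ∈ U)).subset fun m hm => (mem_filter.1 hm).2
  have hM := hS.mono (hMU.trans hUS)
  have hle : ∀ u ∈ U, ∃ m ∈ M, u ≤ m := fun u hu => by
    obtain ⟨m, hum, hm⟩ := U.exists_le_maximal hu
    exact ⟨m, mem_filter.2 ⟨hm.1, hm⟩, hum⟩
  obtain ⟨u, hu⟩ := hne
  obtain ⟨X, hX⟩ := hM.exists_isLUB hanti (let ⟨m, hm, _⟩ := hle u hu; ⟨m, hm⟩)
  have hF := hG.factorsSet_eq_of_isNested hM hanti hX
  refine ⟨X, ⟨fun u hu => ?_, fun Z hZ => hX.2 fun m hm => hZ (hMU hm)⟩,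
    hF ▸ coe_subset.2 (hMU.trans hUS), fun g hg hgX => ?_⟩
  · obtain ⟨m, hm, hum⟩ := hle u hu
    exact hum.trans (hX.1 hm)
  · obtain ⟨h, hh, hgh⟩ := exists_mem_factorsSet_ge (hS.1 hg) hgX
    rw [hF] at hh
    exact hU g hg h (hMU hh) hgh

end NestedBuilding

section NestedChain

variable {L : Type*} [SemilatticeInf L] [Finite L] {G : Set L}

/-- Among the chain elements having a member of the antichain `A` as a factor, the top one
`Y` bounds `A`; if the join of `A` were in `G`, maximality of factors would make it equal to
the member of `A` that is a factor of `Y`, so `A` would be a singleton. -/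
lemma isNested_of_isChain {C : Set L} (hC : IsChain (· ≤ ·) C) {S : Finset L}
    (hS : ∀ g ∈ S, ∃ X ∈ C, g ∈ factorsSet G X) : IsNested G S := by
  refine ⟨fun g hg => let ⟨_, _, hgX⟩ := hS g hg; hgX.1, fun A hAS hanti hA2 => ?_⟩
  obtain ⟨a₀, ha₀⟩ : A.Nonempty := card_pos.1 (by omega)
  obtain ⟨Y, ⟨-, a₁, ha₁, ha₁Y⟩, hYmax⟩ :=
    (hC.mono (Set.sep_subset C fun X => ∃ a ∈ A, a ∈ factorsSet G X)).exists_isGreatest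
      (Set.toFinite _) (let ⟨X, hX, h⟩ := hS a₀ (hAS ha₀); ⟨X, hX, a₀, ha₀, h⟩)
  have hAY : ∀ a ∈ A, a ≤ Y := fun a ha =>
    let ⟨X, hX, haX⟩ := hS a (hAS ha)
    haX.2.1.trans (hYmax ⟨hX, a, ha, haX⟩)
  obtain ⟨j, hj⟩ := exists_isLUB_of_bddAbove ⟨Y, fun a ha => hAY a ha⟩
  refine ⟨j, hj, fun hjG => ?_⟩
  have ha₁j : a₁ = j := ha₁Y.2.2 j hjG (hj.2 fun a ha => hAY a ha) (hj.1 ha₁)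
  obtain ⟨a, ha, hne⟩ := exists_mem_ne hA2 a₁
  exact hne (hanti.eq ha ha₁ ((hj.1 ha).trans ha₁j.ge))

end NestedChain

section FactorWeight

variable {L : Type*} [PartialOrder L] [Fintype L] {G : Set L} {f : L → ℝ} {g X : L}

open Classical in
noncomputable def factors (G : Set L) (X : L) : Finset L := univ.filter (· ∈ factorsSet G X)

open Classical in
/-- The linear extension of `X ↦ barycentre of F(X)` from the vertices of `Δ(L \ {⊥})` to weight
functions. -/
noncomputable def factorWeight (G : Set L) (f : L → ℝ) (g : L) : ℝ :=
  ∑ X ∈ univ.filter (g ∈ factorsSet G ·), f X / #(factors G X)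

lemma mem_factors : g ∈ factors G X ↔ g ∈ factorsSet G X := by simp [factors]

lemma factorWeight_nonneg (hf : ∀ X, 0 ≤ f X) : 0 ≤ factorWeight G f g :=
  sum_nonneg fun X _ => div_nonneg (hf X) (Nat.cast_nonneg _)

lemma exists_of_factorWeight_ne_zero (h : factorWeight G f g ≠ 0) :
    ∃ X, f X ≠ 0 ∧ g ∈ factorsSet G X := by
  obtain ⟨X, hX, hne⟩ := exists_ne_zero_of_sum_ne_zero h
  exact ⟨X, fun h0 => hne (by rw [h0, zero_div]), by simpa using hX⟩

lemma continuous_factorWeight : Continuous (factorWeight (L := L) G) :=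
  continuous_pi fun _ => continuous_finsetSum _ fun X _ => (continuous_apply X).div_const _

open Classical in
/-- The weight on the chain `J '' V` whose normalization by `#factors` puts `prevGap V v` on
`J v`. -/
noncomputable def levelWeight (G : Set L) (V : Finset ℝ) (J : ℝ → L) (Y : L) : ℝ :=
  #(factors G Y) * ∑ v ∈ V, if J v = Y then prevGap V v else 0

variable {V : Finset ℝ} {J : ℝ → L} {Y : L}

lemma exists_of_levelWeight_ne_zero (h : levelWeight G V J Y ≠ 0) : ∃ v ∈ V, J v = Y := by
  obtain ⟨v, hv, hne⟩ := exists_ne_zero_of_sum_ne_zero (right_ne_zero_of_mul h)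
  exact ⟨v, hv, by_contra fun h => hne (if_neg h)⟩

lemma levelWeight_nonneg (hV : ∀ v ∈ V, 0 ≤ v) : 0 ≤ levelWeight G V J Y :=
  mul_nonneg (Nat.cast_nonneg _) <| sum_nonneg fun v hv => by
    split_ifs
    exacts [prevGap_nonneg (hV v hv), le_rfl]

lemma isChain_support_levelWeight (hJ : ∀ v ∈ V, ∀ v' ∈ V, v ≤ v' → J v' ≤ J v) :
    IsChain (· ≤ ·) (Function.support (levelWeight G V J)) := by
  intro Y hY Y' hY' _
  obtain ⟨v, hv, rfl⟩ := exists_of_levelWeight_ne_zero hY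
  obtain ⟨v', hv', rfl⟩ := exists_of_levelWeight_ne_zero hY'
  rcases le_total v v' with h | h
  exacts [Or.inr (hJ v hv v' hv' h), Or.inl (hJ v' hv' v hv h)]

end FactorWeight

namespace IsBuilding

variable {L : Type*} [SemilatticeInf L] [OrderBot L] [Fintype L] {G : Set L} {f w : L → ℝ}
  {g X : L} {S : Finset L} (hG : IsBuilding L G)
include hG

lemma card_factors_pos (hX : X ≠ ⊥) : 0 < #(factors G X) :=
  let ⟨g, hg⟩ := hG.factorsSet_nonempty hX
  card_pos.2 ⟨g, mem_factors.2 hg⟩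

lemma sum_factorWeight (hf : f ⊥ = 0) : ∑ g, factorWeight G f g = ∑ X, f X := by
  classical
  unfold factorWeight
  rw [sum_comm' (t' := univ) (s' := factors G) (by simp [mem_factors])]
  refine sum_congr rfl fun X _ => ?_
  rw [sum_const, nsmul_eq_mul]
  rcases eq_or_ne X ⊥ with rfl | hX
  · rw [hf, zero_div, mul_zero]
  · exact mul_div_cancel₀ _ (Nat.cast_ne_zero.2 (hG.card_factors_pos hX).ne')

open Classical in
lemma card_filter_le_factors (hg : g ∈ G) :
    #((factors G X).filter (g ≤ ·)) = if g ≤ X then 1 else 0 := by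
  split_ifs with hgX
  · obtain ⟨h, hh, hgh⟩ := exists_mem_factorsSet_ge hg hgX
    refine card_eq_one.2 ⟨h, eq_singleton_iff_unique_mem.2
      ⟨mem_filter.2 ⟨mem_factors.2 hh, hgh⟩, fun h' hh' => ?_⟩⟩
    obtain ⟨hh'X, hgh'⟩ := mem_filter.1 hh'
    exact hG.eq_of_le_of_mem_factorsSet hg (mem_factors.1 hh'X) hh hgh' hgh
  · exact card_eq_zero.2 <| filter_eq_empty_iff.2 fun h hh hgh =>
      hgX (hgh.trans (mem_factors.1 hh).2.1)

lemma upperSum_factorWeight (hg : g ∈ G) :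
    upperSum (factorWeight G f) g = upperSum (fun X => f X / #(factors G X)) g := by
  classical
  unfold upperSum factorWeight
  rw [sum_comm' (t' := univ) (s' := fun X => (factors G X).filter (g ≤ ·))
    (by simp [mem_factors]; tauto)]
  simp only [sum_const, hG.card_filter_le_factors hg, ite_smul, one_smul, zero_smul]
  rw [sum_filter]

lemma exists_mem_factorsSet_forall_le {C : Set L} (hC : IsChain (· ≤ ·) C) (hX : X ≠ ⊥) :
    ∃ g ∈ factorsSet G X, ∀ Z ∈ C, g ≤ Z → X ≤ Z := by
  by_contra! hcon
  obtain ⟨g₀, hg₀⟩ := hG.factorsSet_nonempty hX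
  obtain ⟨Z, ⟨-, hXZ⟩, hZmax⟩ :=
    (hC.mono (Set.sep_subset C fun Z => ¬X ≤ Z)).exists_isGreatest (Set.toFinite _)
      (let ⟨Z, hZ, _, hXZ⟩ := hcon g₀ hg₀; ⟨Z, hZ, hXZ⟩)
  refine hXZ (hG.le_of_forall_factorsSet_le hX fun g hg => ?_)
  obtain ⟨Z', hZ', hgZ', hXZ'⟩ := hcon g hg
  exact hgZ'.trans (hZmax ⟨hZ', hXZ'⟩)

lemma exists_mem_factorsSet_upperSum_eq {a : L → ℝ} (ha : IsChain (· ≤ ·) (Function.support a))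
    (hX : X ≠ ⊥) : ∃ g ∈ factorsSet G X, upperSum a g = upperSum a X := by
  classical
  obtain ⟨g, hg, hgX⟩ := hG.exists_mem_factorsSet_forall_le ha hX
  refine ⟨g, hg, (sum_subset (fun Z hZ => ?_) fun Z hZ hXZ => ?_).symm⟩
  · simp only [mem_filter, mem_univ, true_and] at hZ ⊢
    exact hg.2.1.trans hZ
  · by_contra h
    exact hXZ (mem_filter.2 ⟨mem_univ Z, hgX Z h (mem_filter.1 hZ).2⟩)

/-- Upper sums of `f / #factors` at `X ≠ ⊥` are determined by `factorWeight G f`: they are the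
minimum over the factors `g` of `X` of the upper sums of `factorWeight G f` at `g`. -/
lemma upperSum_le_of_factorWeight_eq {f' : L → ℝ} (hf : IsChain (· ≤ ·) (Function.support f))
    (hf' : ∀ X, 0 ≤ f' X) (h : factorWeight G f = factorWeight G f') (hX : X ≠ ⊥) :
    upperSum (fun X => f' X / #(factors G X)) X ≤ upperSum (fun X => f X / #(factors G X)) X := by
  obtain ⟨g, hg, hgX⟩ := hG.exists_mem_factorsSet_upperSum_eq
    (hf.mono fun Z hZ => (div_ne_zero_iff.1 hZ).1) hX
  calc upperSum (fun X => f' X / #(factors G X)) X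
      ≤ upperSum (fun X => f' X / #(factors G X)) g :=
        upperSum_antitone (fun Z => div_nonneg (hf' Z) (Nat.cast_nonneg _)) hg.2.1
    _ = upperSum (factorWeight G f) g := by rw [h, hG.upperSum_factorWeight hg.1]
    _ = _ := (hG.upperSum_factorWeight hg.1).trans hgX

lemma eq_of_factorWeight_eq {f' : L → ℝ} (hf : ∀ X, 0 ≤ f X) (hf' : ∀ X, 0 ≤ f' X)
    (hfC : IsChain (· ≤ ·) (Function.support f)) (hf'C : IsChain (· ≤ ·) (Function.support f'))
    (hf_bot : f ⊥ = 0) (hf'_bot : f' ⊥ = 0) (h : factorWeight G f = factorWeight G f') :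
    f = f' := by
  have ha : (fun X => f X / #(factors G X)) = fun X => f' X / #(factors G X) :=
    eq_of_upperSum_eq (s := {X | X ≠ ⊥}) (by simp [hf_bot]) (by simp [hf'_bot]) fun X hX =>
      le_antisymm (hG.upperSum_le_of_factorWeight_eq hf'C hf h.symm hX)
        (hG.upperSum_le_of_factorWeight_eq hfC hf' h hX)
  funext X
  rcases eq_or_ne X ⊥ with rfl | hX
  · rw [hf_bot, hf'_bot]
  · exact (div_left_inj' (Nat.cast_ne_zero.2 (hG.card_factors_pos hX).ne')).1 (congrFun ha X)

open Classical in
lemma upperSum_factorWeight_levelWeight {V : Finset ℝ} {J : ℝ → L} (hJ : ∀ v ∈ V, J v ≠ ⊥)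
    (hg : g ∈ G) :
    upperSum (factorWeight G (levelWeight G V J)) g = ∑ v ∈ V.filter (g ≤ J ·), prevGap V v := by
  have hdiv : ∀ Y, levelWeight G V J Y / #(factors G Y) =
      ∑ v ∈ V, if J v = Y then prevGap V v else 0 := fun Y => by
    by_cases hY : ∃ v ∈ V, J v = Y
    · obtain ⟨v, hv, rfl⟩ := hY
      exact mul_div_cancel_left₀ _ (Nat.cast_ne_zero.2 (hG.card_factors_pos (hJ v hv)).ne')
    · push Not at hY
      rw [levelWeight, sum_eq_zero fun v hv => if_neg (hY v hv), mul_zero, zero_div]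
  rw [hG.upperSum_factorWeight hg, funext hdiv, upperSum_sum_ite_eq]

lemma exists_superlevel_join (hw : ∀ g, 0 ≤ w g) (hS : IsNested G S) {g₀ : L} (hg₀ : g₀ ∈ S) :
    ∃ X ≠ ⊥, factorsSet G X ⊆ S ∧ ∀ g ∈ S, (g ≤ X ↔ upperSum w g₀ ≤ upperSum w g) := by
  classical
  obtain ⟨X, hX, hXS, hXU⟩ := hG.exists_isLUB_of_isNested hS
    (filter_subset (upperSum w g₀ ≤ upperSum w ·) S)
    (fun g hg h hh hgh => mem_filter.2 ⟨hg, (mem_filter.1 hh).2.trans (upperSum_antitone hw hgh)⟩)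
    ⟨g₀, mem_filter.2 ⟨hg₀, le_rfl⟩⟩
  refine ⟨X, fun hX0 => hG.1 g₀ (hS.1 hg₀) ?_, hXS, fun g hg =>
    ⟨fun hgX => (mem_filter.1 (hXU g hg hgX)).2, fun hle => hX.1 (mem_filter.2 ⟨hg, hle⟩)⟩⟩
  exact le_bot_iff.1 (hX0 ▸ hX.1 (mem_filter.2 ⟨hg₀, le_rfl⟩))

/-- For each value `v` of the upper sums of `w` on `S`, the join `X v` of the superlevel set
`{g ∈ S | v ≤ upperSum w g}` carries normalized weight `prevGap V v`; these telescope back to the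
upper sums of `w`. -/
lemma exists_factorWeight_eq (hw : ∀ g, 0 ≤ w g) (hS : IsNested G S)
    (hwS : ∀ g, w g ≠ 0 → g ∈ S) :
    ∃ f : L → ℝ, (∀ X, 0 ≤ f X) ∧ IsChain (· ≤ ·) (Function.support f) ∧ f ⊥ = 0 ∧
      factorWeight G f = w := by
  classical
  set V := S.image (upperSum w)
  have hlevel : ∀ v, ∃ X, v ∈ V →
      X ≠ ⊥ ∧ factorsSet G X ⊆ S ∧ ∀ g ∈ S, (g ≤ X ↔ v ≤ upperSum w g) := fun v => by
    by_cases hv : v ∈ V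
    · obtain ⟨g₀, hg₀, rfl⟩ := mem_image.1 hv
      obtain ⟨X, hX⟩ := hG.exists_superlevel_join hw hS hg₀
      exact ⟨X, fun _ => hX⟩
    · exact ⟨⊥, fun h => absurd h hv⟩
  choose X hX using hlevel
  have hX_anti : ∀ v ∈ V, ∀ v' ∈ V, v ≤ v' → X v' ≤ X v := fun v hv v' hv' hvv' =>
    hG.le_of_forall_factorsSet_le (hX v' hv').1 fun g hg =>
      have hgS := (hX v' hv').2.1 hg
      ((hX v hv).2.2 g hgS).2 (hvv'.trans (((hX v' hv').2.2 g hgS).1 hg.2.1))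
  refine ⟨levelWeight G V X, fun _ => levelWeight_nonneg fun v hv => ?_,
    isChain_support_levelWeight hX_anti, by_contra fun h => ?_, ?_⟩
  · obtain ⟨g, -, rfl⟩ := mem_image.1 hv
    exact sum_nonneg fun h _ => hw h
  · obtain ⟨v, hv, hv0⟩ := exists_of_levelWeight_ne_zero h
    exact (hX v hv).1 hv0
  refine eq_of_upperSum_eq (s := S) (fun g hg => by_contra fun h => hg ?_)
    (fun g hg => by_contra fun h => hg (hwS g h)) fun g hg => ?_
  · obtain ⟨Y, hY, hgY⟩ := exists_of_factorWeight_ne_zero h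
    obtain ⟨v, hv, rfl⟩ := exists_of_levelWeight_ne_zero hY
    exact (hX v hv).2.1 hgY
  · rw [hG.upperSum_factorWeight_levelWeight (fun v hv => (hX v hv).1) (hS.1 hg),
      filter_congr fun v hv => (hX v hv).2.2 g hg]
    exact sum_prevGap (mem_image_of_mem _ hg)

end IsBuilding

section Realization

variable {V : Type*} [Fintype V]

lemma geomReal.sum_eq_one {K : Set (Finset V)} (p : geomReal K) : ∑ v, p.1 v = 1 := by
  obtain ⟨-, s, -, hs, hsum⟩ := p.2
  exact (sum_subset (subset_univ s) fun v _ hv => by_contra fun h => hv (hs v h)).symm.trans hsum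

instance geomReal.compactSpace (K : Set (Finset V)) : CompactSpace (geomReal K) := by
  suffices h : IsCompact
      {f : V → ℝ | (∀ v, 0 ≤ f v) ∧ ∃ s ∈ K, (∀ v, f v ≠ 0 → v ∈ s) ∧ ∑ v ∈ s, f v = 1} from
    isCompact_iff_compactSpace.1 h
  have : {f : V → ℝ | (∀ v, 0 ≤ f v) ∧ ∃ s ∈ K, (∀ v, f v ≠ 0 → v ∈ s) ∧ ∑ v ∈ s, f v = 1} =
      ⋃ s ∈ K, stdSimplex ℝ V ∩ {f | ∀ v ∉ s, f v = 0} := by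
    ext f
    simp only [Set.mem_ofPred_eq, Set.mem_iUnion, Set.mem_inter_iff, stdSimplex, exists_prop]
    refine ⟨fun ⟨hf, s, hs, hsupp, hsum⟩ => ⟨s, hs, ⟨hf, ?_⟩, fun v hv => ?_⟩,
      fun ⟨s, hs, ⟨hf, hsum⟩, hsupp⟩ => ⟨hf, s, hs, fun v hv => ?_, ?_⟩⟩
    · exact (sum_subset (subset_univ s) fun v _ hv => by_contra fun h => hv (hsupp v h)).symm.trans
        hsum
    · exact by_contra fun h => hv (hsupp v h)
    · exact by_contra fun h => hv (hsupp v h)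
    · exact (sum_subset (subset_univ s) fun v _ hv => hsupp v hv).trans hsum
  rw [this]
  refine (Set.toFinite K).isCompact_biUnion fun s _ => ?_
  refine (isCompact_stdSimplex ℝ V).inter_right ?_
  simp only [Set.ofPred_forall]
  exact isClosed_iInter fun v => isClosed_iInter fun _ =>
    isClosed_eq (continuous_apply v) continuous_const

end Realization

section OrderComplex

variable {L : Type*} [PartialOrder L] [OrderBot L]

lemma geomReal.isChain_support (p : geomReal (orderComplexBot L)) :
    IsChain (· ≤ ·) (Function.support p.1) := by
  obtain ⟨-, s, ⟨-, hs⟩, hsupp, -⟩ := p.2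
  exact hs.mono fun X hX => hsupp X hX

lemma geomReal.apply_bot (p : geomReal (orderComplexBot L)) : p.1 ⊥ = 0 := by
  obtain ⟨-, s, ⟨hs, -⟩, hsupp, -⟩ := p.2
  exact by_contra fun h => hs (hsupp ⊥ h) rfl

end OrderComplex

section FactorMap

variable {L : Type*} [SemilatticeInf L] [OrderBot L] [Fintype L] {G : Set L}

noncomputable def factorMap (hG : IsBuilding L G) :
    geomReal (orderComplexBot L) → geomReal (nestedComplex G) := fun p =>
  ⟨factorWeight G p.1, fun _ => factorWeight_nonneg p.2.1,
    univ.filter (factorWeight G p.1 · ≠ 0),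
    (isNested_of_isChain p.isChain_support fun _ hg =>
      let ⟨X, hX, hgX⟩ := exists_of_factorWeight_ne_zero (mem_filter.1 hg).2
      ⟨X, hX, hgX⟩ : IsNested G _),
    fun g hg => mem_filter.2 ⟨mem_univ g, hg⟩,
    by rw [sum_filter_ne_zero, hG.sum_factorWeight p.apply_bot, p.sum_eq_one]⟩

variable (hG : IsBuilding L G)
include hG

lemma factorMap_continuous : Continuous (factorMap hG) :=
  continuous_induced_rng.2 (continuous_factorWeight.comp continuous_subtype_val)

lemma factorMap_injective : Function.Injective (factorMap hG) := fun p q h =>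
  Subtype.ext <| hG.eq_of_factorWeight_eq p.2.1 q.2.1 p.isChain_support q.isChain_support
    p.apply_bot q.apply_bot (congrArg Subtype.val h)

lemma factorMap_surjective : Function.Surjective (factorMap hG) := by
  classical
  intro q
  obtain ⟨hq, s, hs, hsupp, -⟩ := q.2
  obtain ⟨f, hf, hfC, hf_bot, hfq⟩ := hG.exists_factorWeight_eq hq hs hsupp
  refine ⟨⟨f, hf, univ.filter (f · ≠ 0), ⟨fun X hX hX0 => ?_, hfC.mono fun X hX => ?_⟩,
    fun X hX => mem_filter.2 ⟨mem_univ X, hX⟩, ?_⟩, Subtype.ext hfq⟩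
  · exact (mem_filter.1 hX).2 (hX0 ▸ hf_bot)
  · simpa using hX
  · rw [sum_filter_ne_zero, ← hG.sum_factorWeight hf_bot, hfq, q.sum_eq_one]

end FactorMap

/-- The nested set complex `N(L,G)` is homotopy equivalent to the
order complex `Δ(L \ {⊥})`. -/
theorem stmt6 (L : Type*) [SemilatticeInf L] [OrderBot L] [Fintype L]
    (G : Set L) (hG : IsBuilding L G) :
    Nonempty (ContinuousMap.HomotopyEquiv
      (geomReal (nestedComplex G)) (geomReal (orderComplexBot L))) :=
  let e := (factorMap_continuous hG).homeoOfEquivCompactToT2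
    (f := Equiv.ofBijective _ ⟨factorMap_injective hG, factorMap_surjective hG⟩)
  ⟨e.symm.toHomotopyEquiv⟩
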